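/- arXiv:1105.4443 — 3 statements merged into one kernel-verified Lean document; each statement's English description precedes it below -/
import Mathlib

section
/- Let F ∈ Homeo_ℤ(ℝ) and suppose F = F₁ ∘ F₂ ∘ ⋯ ∘ F_{k+2} where each Fᵢ fixes pointwise some nonempty open interval of ℝ and belongs to Homeo_ℤ(ℝ). Then min_{x ∈ ℝ} |F(x) - x| < k + 1. -/
def HomeoZ (F : Equiv.Perm ℝ) : Prop :=
  Continuous F ∧ StrictMono F ∧ ∀ x : ℝ, F (x + 1) = F x + 1

/-- `G` fixes pointwise some nonempty open interval. -/
def FixesOpenInterval (G : Equiv.Perm ℝ) : Prop :=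
  ∃ a b : ℝ, a < b ∧ ∀ x ∈ Set.Ioo a b, G x = x

/-!
A homeomorphism in `Homeo_ℤ(ℝ)` with a fixed point `c` also fixes every `c + n`, `n ∈ ℤ`, so it
moves each point by less than `1`; by the triangle inequality a composition of `m` such maps moves
each point by less than `m`. Evaluating `F = F₁ ∘ ⋯ ∘ F_{k+2}` at a fixed point of `F_{k+2}` leaves
a composition of `k + 1` of them.
-/

theorem abs_sub_lt_one_of_strictMono_of_map_add_one {f : ℝ → ℝ} (hf : StrictMono f)
    (hf₁ : ∀ x, f (x + 1) = f x + 1) {c : ℝ} (hc : f c = c) (y : ℝ) : |f y - y| < 1 := by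
  set t := Int.fract (y - c)
  have ht₀ : 0 ≤ t := Int.fract_nonneg _
  have ht₁ : t < 1 := Int.fract_lt_one _
  have hy : c + t + ⌊y - c⌋ = y := by linarith [Int.floor_add_fract (y - c)]
  have hfy : f y = f (c + t) + ⌊y - c⌋ := by
    have := AddConstMapClass.map_add_int
      (AddConstMap.mk f hf₁ : AddConstMap ℝ ℝ 1 1) (c + t) ⌊y - c⌋
    rwa [hy] at this
  have hlow : c ≤ f (c + t) := hc ▸ hf.monotone (by linarith)
  have hup : f (c + t) < c + 1 := hc ▸ hf₁ c ▸ hf (by linarith)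
  rw [abs_lt]
  constructor <;> linarith

theorem FixesOpenInterval.exists_fixed {G : Equiv.Perm ℝ} (hG : FixesOpenInterval G) :
    ∃ c, G c = c := by
  obtain ⟨a, b, hab, hfix⟩ := hG
  obtain ⟨c, hc⟩ := exists_between hab
  exact ⟨c, hfix c hc⟩

theorem HomeoZ.abs_sub_lt_one {G : Equiv.Perm ℝ} (hG : HomeoZ G) (hfix : FixesOpenInterval G)
    (y : ℝ) : |G y - y| < 1 :=
  let ⟨_, hc⟩ := hfix.exists_fixed
  abs_sub_lt_one_of_strictMono_of_map_add_one hG.2.1 hG.2.2 hc y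

theorem dist_list_prod_apply_lt {α : Type*} [PseudoMetricSpace α] {r : ℝ}
    {L : List (Equiv.Perm α)} (hL : L ≠ []) (h : ∀ G ∈ L, ∀ y, dist (G y) y < r) (x : α) :
    dist (L.prod x) x < L.length * r := by
  induction L with
  | nil => contradiction
  | cons G L ih =>
    rw [List.forall_mem_cons] at h
    rcases eq_or_ne L [] with rfl | hL
    · simpa using h.1 x
    · calc dist (G (L.prod x)) x ≤ dist (G (L.prod x)) (L.prod x) + dist (L.prod x) x :=
            dist_triangle _ _ _
        _ < r + L.length * r := add_lt_add (h.1 _) (ih hL h.2)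
        _ = (G :: L).length * r := by push_cast [List.length_cons]; ring

theorem displacement_bound_of_fragmentation
    (k : ℕ) (L : List (Equiv.Perm ℝ)) (hlen : L.length = k + 2)
    (hmem : ∀ G ∈ L, HomeoZ G ∧ FixesOpenInterval G)
    (F : Equiv.Perm ℝ) (hF : F = L.prod) :
    sInf (Set.range fun x : ℝ => |F x - x|) < (k : ℝ) + 1 := by
  subst hF
  obtain rfl | ⟨L, G, rfl⟩ := L.eq_nil_or_concat
  · simp at hlen
  rw [List.concat_eq_append] at hlen hmem ⊢
  simp only [List.mem_append, List.mem_singleton] at hmem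
  obtain ⟨c, hc⟩ := (hmem G (Or.inr rfl)).2.exists_fixed
  have hprod : (L ++ [G]).prod c = L.prod c := by simp [List.prod_append, hc]
  have hlen' : L.length = k + 1 := by simpa using hlen
  have hsmall : ∀ H ∈ L, ∀ y, dist (H y) y < 1 := fun H hH y => by
    obtain ⟨hH, hfix⟩ := hmem H (Or.inl hH)
    exact Real.dist_eq _ _ ▸ hH.abs_sub_lt_one hfix y
  have hdisp := dist_list_prod_apply_lt (List.ne_nil_of_length_eq_add_one hlen') hsmall c
  rw [Real.dist_eq, hlen', ← hprod, mul_one, Nat.cast_succ] at hdisp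
  exact csInf_lt_of_lt ⟨0, Set.forall_mem_range.2 fun x => abs_nonneg _⟩ ⟨c, rfl⟩ hdisp
end

section
/- Let F ∈ Homeo_ℤ(ℝ) with 0 ≤ min_{x∈ℝ}(F(x) - x) < 1. Then F can be written as a product F = h⁻¹ ∘ (h ∘ F) of two elements of Homeo_ℤ(ℝ), each of which fixes pointwise a nonempty open interval. -/
noncomputable def tentT (s K α β t : ℝ) : ℝ := max 0 (min (s * (t - α)) (K * (β - t)))

lemma tentT_zero_left {s K α β t : ℝ} (hs : 0 ≤ s) (ht : t ≤ α) : tentT s K α β t = 0 := by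
  have h1 : s * (t - α) ≤ 0 := mul_nonpos_of_nonneg_of_nonpos hs (by linarith)
  have : min (s * (t - α)) (K * (β - t)) ≤ 0 := le_trans (min_le_left _ _) h1
  simp [tentT, max_eq_left this]

lemma tentT_zero_right {s K α β t : ℝ} (hK : 0 ≤ K) (ht : β ≤ t) : tentT s K α β t = 0 := by
  have h1 : K * (β - t) ≤ 0 := mul_nonpos_of_nonneg_of_nonpos hK (by linarith)
  have : min (s * (t - α)) (K * (β - t)) ≤ 0 := le_trans (min_le_right _ _) h1
  simp [tentT, max_eq_left this]

lemma tentT_nonneg {s K α β t : ℝ} : 0 ≤ tentT s K α β t := le_max_left _ _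

lemma tentT_add_le {s K α β t t' : ℝ} (hs : 0 ≤ s) (hK : 0 ≤ K) (h : t ≤ t') :
    tentT s K α β t' ≤ tentT s K α β t + s * (t' - t) := by
  have he : 0 ≤ s * (t' - t) := mul_nonneg hs (by linarith)
  have hKle : K * (β - t') ≤ K * (β - t) := by nlinarith
  have key : min (s * (t' - α)) (K * (β - t')) ≤
      min (s * (t - α)) (K * (β - t)) + s * (t' - t) := by
    rw [← min_add_add_right]
    exact min_le_min (le_of_eq (by ring)) (by linarith)
  simp only [tentT]
  apply max_le
  · linarith [le_max_left (0:ℝ) (min (s * (t - α)) (K * (β - t)))]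
  · linarith [le_max_right (0:ℝ) (min (s * (t - α)) (K * (β - t)))]

lemma tentT_le {s K α β t : ℝ} (hs : 0 ≤ s) (hK : 0 ≤ K) (hα : 0 ≤ α) (ht : 0 ≤ t) :
    tentT s K α β t ≤ s * t := by
  have := tentT_add_le (s := s) (K := K) (α := α) (β := β) hs hK ht
  rw [tentT_zero_left hs hα] at this
  simpa using this

theorem fragmentation_in_two_pieces
    (F : Equiv.Perm ℝ) (hF : HomeoZ F)
    (h0 : 0 ≤ sInf (Set.range fun x : ℝ => F x - x))
    (h1 : sInf (Set.range fun x : ℝ => F x - x) < 1) :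
    ∃ h : Equiv.Perm ℝ, HomeoZ h ∧
      FixesOpenInterval h⁻¹ ∧ FixesOpenInterval (h * F) ∧
      F = h⁻¹ * (h * F) := by
  obtain ⟨Fc, Fm, Fp⟩ := hF
  -- the displacement function
  set φ : ℝ → ℝ := fun x => F x - x with hφ
  have hφc : Continuous φ := Fc.sub continuous_id
  have hper : Function.Periodic φ 1 := by intro x; simp only [hφ]; rw [Fp x]; ring
  have himg : φ '' Set.Icc 0 (0 + 1) = Set.range φ := hper.image_Icc one_pos 0
  have hcpt : IsCompact (Set.range φ) := by
    rw [← himg]; exact (isCompact_Icc).image hφc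
  have hne : (Set.range φ).Nonempty := ⟨φ 0, ⟨0, rfl⟩⟩
  have hbdd : BddBelow (Set.range φ) := hcpt.bddBelow
  obtain ⟨m, hm⟩ : ∃ m : ℝ, m = sInf (Set.range φ) := ⟨_, rfl⟩
  rw [← hm] at h0 h1
  have hmmem : m ∈ Set.range φ := hm ▸ hcpt.sInf_mem hne
  obtain ⟨x₀, hx₀⟩ := hmmem
  have hmle : ∀ x : ℝ, m ≤ F x - x := fun x => hm ▸ csInf_le hbdd ⟨x, rfl⟩
  have hge : ∀ x : ℝ, x ≤ F x := fun x => by have := hmle x; linarith [h0]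
  have hsymm_le : ∀ y : ℝ, F.symm y ≤ y := fun y => by
    have := hge (F.symm y); simpa using this
  have hsymm_sm : StrictMono (F.symm : ℝ → ℝ) := by
    intro a b hab
    have : F (F.symm a) < F (F.symm b) := by simpa using hab
    exact Fm.lt_iff_lt.mp this
  have hsymm_cont : Continuous (F.symm : ℝ → ℝ) := by
    have heq : (F.symm : ℝ → ℝ) =
        (StrictMono.orderIsoOfSurjective F Fm F.surjective).symm := by
      funext y
      have h2 := StrictMono.orderIsoOfSurjective_symm_apply_self F Fm F.surjective (F.symm y)
      rw [F.apply_symm_apply] at h2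
      exact h2.symm
    rw [heq]; exact OrderIso.continuous _
  have hsymm_per : ∀ y : ℝ, F.symm (y + 1) = F.symm y + 1 := by
    intro y
    apply F.injective
    rw [Equiv.apply_symm_apply, Fp, Equiv.apply_symm_apply]
  -- key points
  obtain ⟨c, hc⟩ : ∃ c : ℝ, c = F x₀ := ⟨_, rfl⟩
  have hcm : c = x₀ + m := by rw [hc, ← hx₀]; ring
  have hm1 : m < 1 := h1
  obtain ⟨x₁, hx₁⟩ : ∃ x₁ : ℝ, x₁ = (c + x₀ + 1) / 2 := ⟨_, rfl⟩
  have hcx₁ : c < x₁ := by rw [hx₁, hcm]; linarith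
  have hx₀x₁ : x₀ < x₁ := by rw [hx₁, hcm]; linarith [h0]
  have hx₁lt : x₁ < x₀ + 1 := by rw [hx₁, hcm]; linarith
  obtain ⟨d, hd⟩ : ∃ d : ℝ, d = F x₁ := ⟨_, rfl⟩
  have hx₁d : x₁ ≤ d := by rw [hd]; exact hge x₁
  have hcd : c < d := by rw [hc, hd]; exact Fm hx₀x₁
  have hdlt : d < c + 1 := by
    have := Fm hx₁lt
    rwa [Fp x₀, ← hc, ← hd] at this
  -- tent parameters
  obtain ⟨α, hα⟩ : ∃ α : ℝ, α = (x₁ - c) / 2 := ⟨_, rfl⟩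
  obtain ⟨β, hβ⟩ : ∃ β : ℝ, β = (d - c + 1) / 2 := ⟨_, rfl⟩
  obtain ⟨W, hW⟩ : ∃ W : ℝ, W = d - c - α := ⟨_, rfl⟩
  obtain ⟨D, hD⟩ : ∃ D : ℝ, D = d - x₁ := ⟨_, rfl⟩
  obtain ⟨s, hs⟩ : ∃ s : ℝ, s = (D + W) / (2 * W) := ⟨_, rfl⟩
  have hα0 : 0 < α := by rw [hα]; linarith
  have hW0 : 0 < W := by rw [hW, hα]; linarith
  have hD0 : 0 ≤ D := by rw [hD]; linarith
  have hDW : D < W := by rw [hD, hW, hα]; linarith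
  have hs0 : 0 < s := by rw [hs]; exact div_pos (by linarith) (by linarith)
  have hs1 : s < 1 := by
    rw [hs, div_lt_one (by linarith)]; linarith
  have hsW : D < s * W := by
    have hsw : s * W = (D + W) / 2 := by
      rw [hs]; field_simp
    rw [hsw]; linarith
  have hβd : d - c < β := by rw [hβ]; linarith
  have hβ1 : β < 1 := by rw [hβ]; linarith
  have hαβ : α < β := by rw [hα, hβ]; linarith
  obtain ⟨K, hK⟩ : ∃ K : ℝ, K = s * W / (β - (d - c)) := ⟨_, rfl⟩
  have hK0 : 0 ≤ K := by
    rw [hK]; exact div_nonneg (by nlinarith) (by linarith)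
  have hTd : tentT s K α β (d - c) = s * W := by
    have h2 : K * (β - (d - c)) = s * W := by
      rw [hK, div_mul_cancel₀ _ (by linarith : β - (d - c) ≠ 0)]
    have h3 : s * ((d - c) - α) = s * W := by rw [hW]
    rw [tentT, h2, h3, min_self, max_eq_right (by positivity)]
  -- the auxiliary homeomorphism g
  set T : ℝ → ℝ := tentT s K α β with hT
  set g : ℝ → ℝ := fun y => y - T (Int.fract (y - c)) with hg
  have hTcont : Continuous T := by
    apply continuous_const.max
    exact ((continuous_const.mul (continuous_id.sub continuous_const)).min
      (continuous_const.mul (continuous_const.sub continuous_id)))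
  have hT01 : T 0 = T 1 := by
    rw [hT, tentT_zero_left hs0.le hα0.le, tentT_zero_right hK0 hβ1.le]
  have hgcont : Continuous g := by
    apply continuous_id.sub
    exact (ContinuousOn.comp_fract'' hTcont.continuousOn hT01).comp
      (continuous_id.sub continuous_const)
  have hTfle : ∀ y : ℝ, T (Int.fract y) ≤ s * Int.fract y :=
    fun y => tentT_le hs0.le hK0 hα0.le (Int.fract_nonneg _)
  have hTfnn : ∀ t : ℝ, 0 ≤ T t := fun t => tentT_nonneg
  have hgle : ∀ y : ℝ, g y ≤ y := fun y => by
    simp only [hg]; linarith [hTfnn (Int.fract (y - c))]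
  have hgge : ∀ y : ℝ, y - 1 ≤ g y := fun y => by
    simp only [hg]
    have h2 := hTfle (y - c)
    have h3 : Int.fract (y - c) < 1 := Int.fract_lt_one _
    nlinarith [hs1, hs0.le, Int.fract_nonneg (y - c)]
  have hgsm : StrictMono g := by
    have key : ∀ y : ℝ, g y = c + (⌊y - c⌋ : ℝ) +
        (Int.fract (y - c) - T (Int.fract (y - c))) := by
      intro y
      have h2 : (⌊y - c⌋ : ℝ) + Int.fract (y - c) = y - c := Int.floor_add_fract _
      simp only [hg]; linarith only [h2]
    intro y1 y2 hlt
    have hk : ⌊y1 - c⌋ ≤ ⌊y2 - c⌋ := Int.floor_le_floor (by linarith)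
    have hfl1 := Int.fract_lt_one (y1 - c)
    have hfnn2 := Int.fract_nonneg (y2 - c)
    have hT1 := hTfnn (Int.fract (y1 - c))
    have hT2le := hTfle (y2 - c)
    have e1 := key y1
    have e2 := key y2
    have hfloor1 : (⌊y1 - c⌋ : ℝ) + Int.fract (y1 - c) = y1 - c := Int.floor_add_fract _
    have hfloor2 : (⌊y2 - c⌋ : ℝ) + Int.fract (y2 - c) = y2 - c := Int.floor_add_fract _
    rcases eq_or_lt_of_le hk with hkeq | hklt
    · have hceq : ((⌊y1 - c⌋ : ℤ) : ℝ) = ((⌊y2 - c⌋ : ℤ) : ℝ) := congrArg _ hkeq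
      have hff : Int.fract (y1 - c) < Int.fract (y2 - c) := by
        linarith only [hceq, hfloor1, hfloor2, hlt]
      have hTT : T (Int.fract (y2 - c)) ≤ T (Int.fract (y1 - c)) +
          s * (Int.fract (y2 - c) - Int.fract (y1 - c)) := by
        rw [hT]; exact tentT_add_le hs0.le hK0 hff.le
      have hss : s * (Int.fract (y2 - c) - Int.fract (y1 - c)) <
          1 * (Int.fract (y2 - c) - Int.fract (y1 - c)) :=
        mul_lt_mul_of_pos_right hs1 (by linarith)
      show g y1 < g y2
      rw [e1, e2]
      linarith only [hceq, hTT, hss]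
    · have hk1k2 : ((⌊y1 - c⌋ : ℤ) : ℝ) + 1 ≤ ((⌊y2 - c⌋ : ℤ) : ℝ) := by
        exact_mod_cast hklt
      have hmid : 0 ≤ Int.fract (y2 - c) - T (Int.fract (y2 - c)) := by
        have h3 := mul_le_mul_of_nonneg_right hs1.le hfnn2
        linarith only [hT2le, h3, hfnn2]
      show g y1 < g y2
      rw [e1, e2]
      linarith only [hk1k2, hT1, hfl1, hmid]
  have hgper : ∀ y : ℝ, g (y + 1) = g y + 1 := by
    intro y
    simp only [hg]
    have : y + 1 - c = (y - c) + 1 := by ring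
    rw [this, Int.fract_add_one]
    ring
  -- the homeomorphism h
  set hfun : ℝ → ℝ := fun y => max (F.symm y) (g y) with hhfun
  have hhsm : StrictMono hfun := fun a b hab =>
    max_lt_max (hsymm_sm hab) (hgsm hab)
  have hhcont : Continuous hfun := hsymm_cont.max hgcont
  have hhle : ∀ y, hfun y ≤ y := fun y => max_le (hsymm_le y) (hgle y)
  have hhge : ∀ y, y - 1 ≤ hfun y := fun y => le_trans (hgge y) (le_max_right _ _)
  have hhsurj : Function.Surjective hfun := by
    apply hhcont.surjective
    · apply Filter.tendsto_atTop_mono hhge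
      exact Filter.tendsto_atTop_add_const_right _ _ Filter.tendsto_id
    · apply Filter.tendsto_atBot_mono hhle
      exact Filter.tendsto_id
  set hperm : Equiv.Perm ℝ := Equiv.ofBijective hfun ⟨hhsm.injective, hhsurj⟩ with hhperm
  have hcoe : ∀ y, hperm y = hfun y := fun y => rfl
  refine ⟨hperm, ⟨?_, ?_, ?_⟩, ?_, ?_, ?_⟩
  · exact hhcont
  · exact hhsm
  · intro x
    show hfun (x + 1) = hfun x + 1
    simp only [hhfun, hsymm_per x, hgper x]
    rw [max_add_add_right]
  · -- h⁻¹ fixes (c, c + α)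
    refine ⟨c, c + α, by linarith, ?_⟩
    rintro x ⟨hx1, hx2⟩
    have hfix : hperm x = x := by
      rw [hcoe]
      simp only [hhfun]
      have hfr : Int.fract (x - c) = x - c :=
        Int.fract_eq_self.mpr ⟨by linarith, by linarith⟩
      have hgx : g x = x := by
        simp only [hg, hfr, hT, tentT_zero_left hs0.le (by linarith : x - c ≤ α)]
        ring
      rw [hgx]
      exact max_eq_right (hsymm_le x)
    show hperm⁻¹ x = x
    rw [← hfix]
    simp
    exact hfix.symm
  · -- h * F fixes a neighbourhood of x₁
    have hVopen : IsOpen {x : ℝ | g (F x) < x} := by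
      apply isOpen_lt (hgcont.comp Fc) continuous_id
    have hx₁V : x₁ ∈ {x : ℝ | g (F x) < x} := by
      show g (F x₁) < x₁
      rw [← hd]
      have hfr : Int.fract (d - c) = d - c :=
        Int.fract_eq_self.mpr ⟨by linarith, by linarith⟩
      simp only [hg, hfr, hT, hTd]
      rw [hD] at hsW; linarith
    obtain ⟨l, u, hlu, hsub⟩ := mem_nhds_iff_exists_Ioo_subset.mp
      (hVopen.mem_nhds hx₁V)
    refine ⟨l, u, hlu.1.trans hlu.2, ?_⟩
    intro x hx
    have hxV : g (F x) < x := hsub hx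
    show hperm (F x) = x
    rw [hcoe]
    simp only [hhfun]
    have hFFx : F.symm (F x) = x := F.symm_apply_apply x
    rw [hFFx]
    exact max_eq_left hxV.le
  · group
end

section
/- Let F ∈ Homeo_ℤ(ℝ) and k ≥ 0 an integer. Then F is a product of at most k+2 elements of Homeo_ℤ(ℝ), each fixing pointwise a nonempty open interval, if and only if min_{x∈ℝ}|F(x) - x| < k + 1. -/
/-!
Every `G` fixing a point `c` and commuting with `x ↦ x + 1` maps each `[c + n, c + n + 1)` into
itself, so it moves every point by less than `1`. If `F = G₁ ⋯ G_m` and `G_m` fixes `c`, then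
`F c = G₁ ⋯ G_{m-1} c` is within `m - 1` of `c` (strictly, or equal to `c` when `m = 1`).

Conversely, if `|F p - p| < 1` there is room in `[p, p + 1]` for an interval disjoint from `p`
and `F p` modulo `1`; gluing `F` near `p`, the identity on that interval and affine pieces, then
extending periodically, gives `G ∈ A` agreeing with `F` near `p`, and `F = G · (G⁻¹ F)` with
`G⁻¹ F ∈ A`. If `|F x - x| < k + 2`, one element of `A` (a localized translation) carries
`q = x + (k + 1) / (k + 2) · (F x - x)` to `F x`, which reduces the displacement at `x` below
`k + 1`, and induction finishes.
-/

open Set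

namespace HomeoZ

variable {F G : Equiv.Perm ℝ}

lemma mul (hF : HomeoZ F) (hG : HomeoZ G) : HomeoZ (F * G) :=
  ⟨hF.1.comp hG.1, hF.2.1.comp hG.2.1, fun x => by
    simp only [Equiv.Perm.mul_apply, hG.2.2, hF.2.2]⟩

lemma inv (hF : HomeoZ F) : HomeoZ F⁻¹ := by
  have hmono : StrictMono F.symm := fun x y hxy =>
    hF.2.1.lt_iff_lt.mp (by simpa only [Equiv.apply_symm_apply] using hxy)
  refine ⟨hmono.monotone.continuous_of_surjective F.symm.surjective, hmono, fun x => ?_⟩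
  apply F.injective
  rw [Equiv.Perm.coe_inv, hF.2.2, Equiv.apply_symm_apply, Equiv.apply_symm_apply]

lemma addRight (s : ℝ) : HomeoZ (Equiv.addRight s) :=
  ⟨continuous_add_const s, add_left_strictMono, fun x => add_right_comm x 1 s⟩

lemma abs_sub_lt_one_s14 (hG : HomeoZ G) (hfix : FixesOpenInterval G) (x : ℝ) :
    |G x - x| < 1 := by
  obtain ⟨a, b, hab, hfx⟩ := hfix
  obtain ⟨c, hcab⟩ := nonempty_Ioo.mpr hab
  have hc : G c = c := hfx c hcab
  have hper : Function.Periodic (fun x => G x - x) 1 := fun x => by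
    simp only [hG.2.2]; ring
  obtain ⟨y, ⟨hcy, hyc⟩, hxy⟩ := hper.exists_mem_Ico one_pos x c
  have hGy₁ : c ≤ G y := hc ▸ hG.2.1.monotone hcy
  have hGy₂ : G y < c + 1 := by simpa only [hG.2.2, hc] using hG.2.1 hyc
  rw [hxy, abs_sub_lt_iff]
  constructor <;> linarith

end HomeoZ

lemma abs_list_prod_sub_le {L : List (Equiv.Perm ℝ)} (h : ∀ G ∈ L, ∀ x, |G x - x| < 1)
    (x : ℝ) : |L.prod x - x| ≤ L.length := by
  induction L with
  | nil => simp
  | cons G L ih =>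
    have hG : |G (L.prod x) - L.prod x| < 1 := h G List.mem_cons_self _
    have hL := ih fun H hH => h H (List.mem_cons_of_mem G hH)
    rw [List.prod_cons, List.length_cons, Nat.cast_succ]
    calc |G (L.prod x) - x| ≤ |G (L.prod x) - L.prod x| + |L.prod x - x| := abs_sub_le _ _ _
      _ ≤ L.length + 1 := by linarith

lemma abs_list_prod_sub_lt {L : List (Equiv.Perm ℝ)} (hL : L ≠ [])
    (h : ∀ G ∈ L, ∀ x, |G x - x| < 1) (x : ℝ) : |L.prod x - x| < L.length := by
  obtain ⟨G, L, rfl⟩ := List.exists_cons_of_ne_nil hL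
  have hG : |G (L.prod x) - L.prod x| < 1 := h G List.mem_cons_self _
  have hL := abs_list_prod_sub_le (fun H hH => h H (List.mem_cons_of_mem G hH)) x
  rw [List.prod_cons, List.length_cons, Nat.cast_succ]
  calc |G (L.prod x) - x| ≤ |G (L.prod x) - L.prod x| + |L.prod x - x| := abs_sub_le _ _ _
    _ < L.length + 1 := by linarith

noncomputable def periodicExtension (a : ℝ) (g : ℝ → ℝ) (x : ℝ) : ℝ :=
  g (x - ⌊x - a⌋) + ⌊x - a⌋

section periodicExtension

variable {a : ℝ} {g : ℝ → ℝ}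

lemma periodicExtension_add_intCast {x : ℝ} (hx : x ∈ Ico a (a + 1)) (m : ℤ) :
    periodicExtension a g (x + m) = g x + m := by
  have hfloor : ⌊x + m - a⌋ = m := by
    rw [Int.floor_eq_iff]; constructor <;> linarith [hx.1, hx.2]
  simp only [periodicExtension, hfloor, add_sub_cancel_right]

lemma periodicExtension_eqOn : EqOn (periodicExtension a g) g (Ico a (a + 1)) := fun x hx => by
  simpa using periodicExtension_add_intCast (g := g) hx 0

lemma periodicExtension_add_one (x : ℝ) :
    periodicExtension a g (x + 1) = periodicExtension a g x + 1 := by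
  simp only [periodicExtension, add_sub_right_comm x 1 a, Int.floor_add_one, Int.cast_add,
    Int.cast_one]
  ring_nf

lemma sub_floor_sub_mem_Ico (x : ℝ) : x - ⌊x - a⌋ ∈ Ico a (a + 1) := by
  constructor <;> linarith [Int.floor_le (x - a), Int.lt_floor_add_one (x - a)]

lemma strictMono_periodicExtension (hg : StrictMonoOn g (Icc a (a + 1)))
    (hper : g (a + 1) = g a + 1) : StrictMono (periodicExtension a g) := by
  intro x y hxy
  obtain ⟨hx₁, hx₂⟩ := sub_floor_sub_mem_Ico (a := a) x
  obtain ⟨hy₁, hy₂⟩ := sub_floor_sub_mem_Ico (a := a) y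
  have hfloor : ⌊x - a⌋ ≤ ⌊y - a⌋ := Int.floor_le_floor (by linarith)
  simp only [periodicExtension]
  rcases hfloor.eq_or_lt with heq | hlt
  · rw [heq] at hx₁ hx₂ ⊢
    linarith [hg ⟨hx₁, hx₂.le⟩ ⟨hy₁, hy₂.le⟩ (by linarith)]
  · have hgx : g (x - ⌊x - a⌋) < g a + 1 :=
      hper ▸ hg ⟨hx₁, hx₂.le⟩ ⟨by linarith, le_rfl⟩ hx₂
    have hgy : g a ≤ g (y - ⌊y - a⌋) :=
      hg.monotoneOn ⟨le_rfl, by linarith⟩ ⟨hy₁, hy₂.le⟩ hy₁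
    have hcast : (⌊x - a⌋ : ℝ) + 1 ≤ ⌊y - a⌋ := by exact_mod_cast hlt
    linarith

lemma surjective_periodicExtension (hc : ContinuousOn g (Icc a (a + 1)))
    (hper : g (a + 1) = g a + 1) : Function.Surjective (periodicExtension a g) := by
  intro z
  set m := ⌊z - g a⌋
  have hzm : z - m ∈ Ico (g a) (g (a + 1)) := by
    rw [hper]; constructor <;> linarith [Int.floor_le (z - g a), Int.lt_floor_add_one (z - g a)]
  obtain ⟨x, hx, hgx⟩ := intermediate_value_Ico (by linarith) hc hzm
  exact ⟨x + m, by rw [periodicExtension_add_intCast hx, hgx, sub_add_cancel]⟩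

lemma exists_homeoZ_eqOn_Ico (hmono : StrictMonoOn g (Icc a (a + 1)))
    (hc : ContinuousOn g (Icc a (a + 1))) (hper : g (a + 1) = g a + 1) :
    ∃ G : Equiv.Perm ℝ, HomeoZ G ∧ EqOn G g (Ico a (a + 1)) := by
  have hsm := strictMono_periodicExtension hmono hper
  have hsurj := surjective_periodicExtension hc hper
  exact ⟨Equiv.ofBijective _ ⟨hsm.injective, hsurj⟩,
    ⟨hsm.monotone.continuous_of_surjective hsurj, hsm, periodicExtension_add_one⟩,
    periodicExtension_eqOn⟩

end periodicExtension

noncomputable def affineThrough (x₁ y₁ x₂ y₂ x : ℝ) : ℝ :=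
  y₁ + (x - x₁) * ((y₂ - y₁) / (x₂ - x₁))

section affineThrough

variable {x₁ y₁ x₂ y₂ : ℝ}

lemma affineThrough_left : affineThrough x₁ y₁ x₂ y₂ x₁ = y₁ := by
  simp [affineThrough]

lemma affineThrough_right (h : x₁ ≠ x₂) : affineThrough x₁ y₁ x₂ y₂ x₂ = y₂ := by
  have : x₂ - x₁ ≠ 0 := sub_ne_zero.mpr h.symm
  simp only [affineThrough]; field_simp; ring

lemma strictMono_affineThrough (hx : x₁ < x₂) (hy : y₁ < y₂) :
    StrictMono (affineThrough x₁ y₁ x₂ y₂) := fun u v huv => by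
  have : 0 < (y₂ - y₁) / (x₂ - x₁) := div_pos (by linarith) (by linarith)
  simp only [affineThrough]; nlinarith

lemma continuous_affineThrough : Continuous (affineThrough x₁ y₁ x₂ y₂) := by
  unfold affineThrough; fun_prop

end affineThrough

lemma strictMonoOn_ite_le {f h : ℝ → ℝ} {a b c : ℝ} (hac : a ≤ c) (hcb : c ≤ b)
    (hf : StrictMonoOn f (Icc a c)) (hh : StrictMonoOn h (Icc c b)) (heq : f c = h c) :
    StrictMonoOn (fun x => if x ≤ c then f x else h x) (Icc a b) := by
  intro x hx y hy hxy
  by_cases hxc : x ≤ c <;> by_cases hyc : y ≤ c <;> simp only [hxc, hyc, if_true, if_false]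
  · exact hf ⟨hx.1, hxc⟩ ⟨hy.1, hyc⟩ hxy
  · replace hyc := not_le.mp hyc
    calc f x ≤ f c := hf.monotoneOn ⟨hx.1, hxc⟩ ⟨hac, le_rfl⟩ hxc
      _ = h c := heq
      _ < h y := hh ⟨le_rfl, hcb⟩ ⟨hyc.le, hy.2⟩ hyc
  · exact absurd (hyc.trans (not_le.mp hxc).le) (not_le.mpr hxy)
  · exact hh ⟨(not_le.mp hxc).le, hx.2⟩ ⟨(not_le.mp hyc).le, hy.2⟩ hxy

/-- On `[a, a + 1]`: `f`, then affine up to the diagonal, the identity on `[c, d]`, and affine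
again up to `f a + 1`. -/
lemma exists_homeoZ_eqOn_eqOn_id {f : ℝ → ℝ} (hf : Continuous f) {a b c d : ℝ}
    (hfm : StrictMonoOn f (Icc a b)) (hab : a < b) (hbc : b < c) (hcd : c < d)
    (hda : d < a + 1) (hfb : f b < c) (hdfa : d < f a + 1) :
    ∃ G : Equiv.Perm ℝ, HomeoZ G ∧ EqOn G f (Icc a b) ∧ EqOn G id (Icc c d) := by
  set inner : ℝ → ℝ := fun x => if x ≤ d then x else affineThrough d d (a + 1) (f a + 1) x
  set mid : ℝ → ℝ := fun x => if x ≤ c then affineThrough b (f b) c c x else inner x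
  set g : ℝ → ℝ := fun x => if x ≤ b then f x else mid x
  have hmono : StrictMonoOn g (Icc a (a + 1)) := by
    refine strictMonoOn_ite_le hab.le (by linarith) hfm
      (strictMonoOn_ite_le hbc.le (by linarith) ((strictMono_affineThrough hbc hfb).strictMonoOn _)
        (strictMonoOn_ite_le hcd.le hda.le (strictMono_id.strictMonoOn _)
          ((strictMono_affineThrough hda hdfa).strictMonoOn _) affineThrough_left.symm) ?_) ?_
    · simp only [inner, if_pos hcd.le, affineThrough_right hbc.ne]
    · simp only [mid, if_pos hbc.le, affineThrough_left]
  have hcont : Continuous g := by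
    refine hf.if_le (continuous_affineThrough.if_le (continuous_id.if_le continuous_affineThrough
      continuous_id continuous_const ?_) continuous_id continuous_const ?_) continuous_id
      continuous_const ?_ <;> intro x hx <;> rw [hx]
    · exact affineThrough_left.symm
    · simp only [inner, if_pos hcd.le, affineThrough_right hbc.ne]
    · simp only [mid, if_pos hbc.le, affineThrough_left]
  have hper : g (a + 1) = g a + 1 := by
    simp only [g, mid, inner, if_neg (show ¬ a + 1 ≤ b by linarith),
      if_neg (show ¬ a + 1 ≤ c by linarith), if_neg (show ¬ a + 1 ≤ d by linarith),
      if_pos hab.le, affineThrough_right hda.ne]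
  obtain ⟨G, hG, hGg⟩ := exists_homeoZ_eqOn_Ico hmono hcont.continuousOn hper
  refine ⟨G, hG, fun x hx => ?_, fun x hx => ?_⟩
  · rw [hGg ⟨hx.1, by linarith [hx.2]⟩]
    simp only [g, if_pos hx.2]
  · rw [hGg ⟨by linarith [hx.1], by linarith [hx.2]⟩]
    simp only [g, mid, inner, if_neg (show ¬ x ≤ b by linarith [hx.1]), if_pos hx.2, id]
    rcases hx.1.eq_or_lt with rfl | hcx
    · simp only [le_rfl, if_true, affineThrough_right hbc.ne]
    · simp only [if_neg (not_le.mpr hcx)]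

lemma HomeoZ.exists_fixesOpenInterval_eqOn {F : Equiv.Perm ℝ} (hF : HomeoZ F) {p : ℝ}
    (hp : |F p - p| < 1) :
    ∃ G : Equiv.Perm ℝ, HomeoZ G ∧ FixesOpenInterval G ∧
      ∃ a b : ℝ, p ∈ Ioo a b ∧ EqOn G F (Ioo a b) := by
  set δ := (1 - |F p - p|) / 5
  have hδ : 5 * δ = 1 - |F p - p| := by simp only [δ]; ring
  set a := max (p - δ) (F.symm (F p - δ))
  set b := min (p + δ) (F.symm (F p + δ))
  have hap : a < p := max_lt (by linarith)
    (hF.2.1.lt_iff_lt.mp (by rw [F.apply_symm_apply]; linarith))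
  have hpb : p < b := lt_min (by linarith)
    (hF.2.1.lt_iff_lt.mp (by rw [F.apply_symm_apply]; linarith))
  have hFa : F p - δ ≤ F a := F.apply_symm_apply (F p - δ) ▸ hF.2.1.monotone (le_max_right _ _)
  have hFb : F b ≤ F p + δ := F.apply_symm_apply (F p + δ) ▸ hF.2.1.monotone (min_le_right _ _)
  have hpa : p - δ ≤ a := le_max_left _ _
  have hbp : b ≤ p + δ := min_le_left _ _
  -- the fixed interval `(c, c + δ)` lies strictly between `max p (F p)` and `min p (F p) + 1`
  set c := max p (F p) + 2 * δ
  have hm₁ : max p (F p) ≤ p + |F p - p| := max_le (by linarith [abs_nonneg (F p - p)])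
    (by linarith [le_abs_self (F p - p)])
  have hm₂ : max p (F p) ≤ F p + |F p - p| := max_le (by linarith [neg_abs_le (F p - p)])
    (by linarith [abs_nonneg (F p - p)])
  obtain ⟨G, hG, hGF, hGid⟩ := exists_homeoZ_eqOn_eqOn_id hF.1 (hF.2.1.strictMonoOn _)
    (hap.trans hpb) (show b < c by linarith [le_max_left p (F p)]) (show c < c + δ by linarith)
    (show c + δ < a + 1 by linarith) (show F b < c by linarith [le_max_right p (F p)])
    (show c + δ < F a + 1 by linarith)
  exact ⟨G, hG, ⟨c, c + δ, by linarith, fun x hx => hGid (Ioo_subset_Icc_self hx)⟩,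
    a, b, ⟨hap, hpb⟩, hGF.mono Ioo_subset_Icc_self⟩

lemma exists_homeoZ_fixesOpenInterval_apply_eq {p q : ℝ} (h : |q - p| < 1) :
    ∃ G : Equiv.Perm ℝ, HomeoZ G ∧ FixesOpenInterval G ∧ G p = q := by
  obtain ⟨G, hG, hfix, _, _, hp, hGF⟩ :=
    (HomeoZ.addRight (q - p)).exists_fixesOpenInterval_eqOn (p := p) (by simpa using h)
  exact ⟨G, hG, hfix, by rw [hGF hp]; simp⟩

/-- `Frag F ≤ n` in the paper's notation. -/
def FragLE (n : ℕ) (F : Equiv.Perm ℝ) : Prop :=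
  ∃ L : List (Equiv.Perm ℝ), L.length ≤ n ∧ (∀ G ∈ L, HomeoZ G ∧ FixesOpenInterval G) ∧
    F = L.prod

section FragLE

variable {n : ℕ} {F G : Equiv.Perm ℝ}

lemma fragLE_one (hG : HomeoZ G) (hfix : FixesOpenInterval G) : FragLE 1 G :=
  ⟨[G], le_rfl, by simpa using ⟨hG, hfix⟩, by simp⟩

lemma FragLE.mul_left (hG : HomeoZ G) (hfix : FixesOpenInterval G) (hF : FragLE n F) :
    FragLE (n + 1) (G * F) := by
  obtain ⟨L, hlen, hL, rfl⟩ := hF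
  refine ⟨G :: L, by simpa using hlen, ?_, by simp⟩
  simpa using ⟨⟨hG, hfix⟩, hL⟩

lemma fragLE_two (hF : HomeoZ F) {p : ℝ} (hp : |F p - p| < 1) : FragLE 2 F := by
  obtain ⟨G, hG, hfix, a, b, hab, hGF⟩ := hF.exists_fixesOpenInterval_eqOn hp
  have hfix' : FixesOpenInterval (G⁻¹ * F) := ⟨a, b, hab.1.trans hab.2, fun x hx => by
    rw [Equiv.Perm.mul_apply, ← hGF hx, Equiv.Perm.coe_inv, Equiv.symm_apply_apply]⟩
  simpa using (fragLE_one (hG.inv.mul hF) hfix').mul_left hG hfix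

lemma fragLE_of_abs_sub_lt {k : ℕ} (hF : HomeoZ F) {x : ℝ} (hx : |F x - x| < k + 1) :
    FragLE (k + 2) F := by
  induction k generalizing F with
  | zero => exact fragLE_two hF (by simpa using hx)
  | succ k ih =>
    push_cast at hx
    set q := x + (F x - x) * ((k + 1) / (k + 2))
    have hk : (0 : ℝ) < k + 2 := by positivity
    have hq : |F x - q| < 1 := by
      have : F x - q = (F x - x) / (k + 2) := by simp only [q]; field_simp; ring
      rw [this, abs_div, abs_of_pos hk, div_lt_one hk]
      linarith
    obtain ⟨G, hG, hfix, hGq⟩ := exists_homeoZ_fixesOpenInterval_apply_eq hq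
    have hF' : |(G⁻¹ * F) x - x| < k + 1 := by
      have hr : (0 : ℝ) < (k + 1) / (k + 2) := by positivity
      rw [Equiv.Perm.mul_apply, ← hGq, Equiv.Perm.coe_inv, Equiv.symm_apply_apply,
        add_sub_cancel_left, abs_mul, abs_of_pos hr, mul_div_assoc', div_lt_iff₀ hk]
      nlinarith
    simpa using (ih (hG.inv.mul hF) hF').mul_left hG hfix

lemma FragLE.exists_abs_sub_lt {k : ℕ} (hF : FragLE (k + 2) F) : ∃ x, |F x - x| < k + 1 := by
  obtain ⟨L, hlen, hL, rfl⟩ := hF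
  rcases L.eq_nil_or_concat' with rfl | ⟨L, G, rfl⟩
  · exact ⟨0, by simp only [List.prod_nil, Equiv.Perm.coe_one, id, sub_self, abs_zero]; positivity⟩
  obtain ⟨a, b, hab, hfix⟩ := (hL G (by simp)).2
  obtain ⟨c, hc⟩ := nonempty_Ioo.mpr hab
  refine ⟨c, ?_⟩
  rw [List.prod_append, List.prod_singleton, Equiv.Perm.mul_apply, hfix c hc]
  rcases eq_or_ne L [] with rfl | hne
  · simp only [List.prod_nil, Equiv.Perm.coe_one, id, sub_self, abs_zero]; positivity
  have hlen' : (L.length : ℝ) ≤ k + 1 := by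
    rw [List.length_append, List.length_singleton] at hlen
    exact_mod_cast Nat.le_of_add_le_add_right hlen
  refine (abs_list_prod_sub_lt hne (fun H hH => ?_) c).trans_le hlen'
  obtain ⟨hH, hHfix⟩ := hL H (List.mem_append_left _ hH)
  exact hH.abs_sub_lt_one_s14 hHfix

end FragLE

theorem fragmentation_norm_criterion
    (F : Equiv.Perm ℝ) (hF : HomeoZ F) (k : ℕ) :
    (∃ L : List (Equiv.Perm ℝ), L.length ≤ k + 2 ∧
        (∀ G ∈ L, HomeoZ G ∧ FixesOpenInterval G) ∧ F = L.prod) ↔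
      sInf (Set.range fun x : ℝ => |F x - x|) < (k : ℝ) + 1 := by
  have hbdd : BddBelow (range fun x : ℝ => |F x - x|) :=
    ⟨0, by rintro _ ⟨x, rfl⟩; exact abs_nonneg _⟩
  rw [csInf_lt_iff hbdd (range_nonempty _), exists_range_iff]
  exact ⟨FragLE.exists_abs_sub_lt, fun ⟨_, hx⟩ => fragLE_of_abs_sub_lt hF hx⟩
end
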